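/- arXiv:2312.09485 — 2 statements merged into one kernel-verified Lean document; each statement's English description precedes it below -/
import Mathlib

section
/- Dobinski-type formula for degenerate r-Dowling polynomials: with W^{(r)}_{m,λ}(n,k) = (1/(m^k k!)) Σ_{j=0}^{k} C(k,j)(-1)^{k-j}(mj+r)_{n,λ} and D^{(r)}_{m,λ}(n,x) = Σ_{k=0}^{n} W^{(r)}_{m,λ}(n,k) x^k, for every real x, nonnegative integer r, positive integer m and n ≥ 0, the series Σ_{k=0}^{∞} (x^k/(m^k k!)) (mk+r)_{n,λ} converges and D^{(r)}_{m,λ}(n,x) = e^{-x/m} Σ_{k=0}^{∞} (x^k/(m^k k!)) (mk+r)_{n,λ}. -/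
/-!
`k ↦ (mk + r)_{n,λ}` is a polynomial of degree at most `n` in `k`, so Newton's forward-difference
formula writes it as `∑_{j ≤ n} C(k, j) Δʲ(0)`, and `Δʲ(0) = ∑_i C(j, i) (-1)^{j-i} (mi + r)_{n,λ}`
is `mʲ j! W^{(r)}_{m,λ}(n, j)`. Summing term by term against `tᵏ/k!`, with `t = x/m`, and using
`∑_k C(k, j) tᵏ/k! = tʲ/j! · eᵗ` gives `eᵗ D^{(r)}_{m,λ}(n, x)`.
-/

/-- The degenerate falling factorial `(x)_{n,λ} = x(x-λ)⋯(x-(n-1)λ)`, with `(x)_{0,λ} = 1`. -/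
def degFall (x lam : ℝ) (n : ℕ) : ℝ :=
  ∏ i ∈ Finset.range n, (x - (i : ℝ) * lam)

/-- The degenerate r-Whitney numbers of the second kind. -/
noncomputable def degRWhitney (m r : ℕ) (lam : ℝ) (n k : ℕ) : ℝ :=
  (1 / ((m : ℝ) ^ k * (k.factorial : ℝ))) *
    ∑ j ∈ Finset.range (k + 1),
      (k.choose j : ℝ) * (-1 : ℝ) ^ (k - j) * degFall ((m : ℝ) * (j : ℝ) + (r : ℝ)) lam n

/-- The degenerate r-Dowling polynomials `D^{(r)}_{m,λ}(n,x) = Σ_{k=0}^n W^{(r)}_{m,λ}(n,k) xᵏ`. -/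
noncomputable def degRDowling (m r : ℕ) (lam : ℝ) (n : ℕ) (x : ℝ) : ℝ :=
  ∑ k ∈ Finset.range (n + 1), degRWhitney m r lam n k * x ^ k

open Finset Polynomial fwdDiff Nat

theorem hasSum_choose_mul_pow_div_factorial (j : ℕ) (t : ℝ) :
    HasSum (fun k : ℕ => (k.choose j : ℝ) * t ^ k / k !) (t ^ j / j ! * Real.exp t) := by
  have hexp : HasSum (fun i : ℕ => t ^ j / j ! * (t ^ i / i !)) (t ^ j / j ! * Real.exp t) :=
    (Real.exp_eq_exp_ℝ ▸ NormedSpace.expSeries_div_hasSum_exp t).mul_left _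
  rw [← (add_left_injective j).hasSum_iff fun k hk => ?_]
  · convert hexp using 1
    ext i
    have hfac : ((i + j).choose j * i ! * j ! : ℝ) = (i + j)! := by
      exact_mod_cast Nat.add_choose_mul_factorial_mul_factorial i j
    have hchoose : ((i + j).choose j : ℝ) ≠ 0 :=
      Nat.cast_ne_zero.mpr (Nat.choose_pos (Nat.le_add_left j i)).ne'
    simp only [Function.comp_apply, pow_add, ← hfac]
    field_simp
  · have hkj : k < j := by
      by_contra! h
      exact hk ⟨k - j, Nat.sub_add_cancel h⟩
    simp [Nat.choose_eq_zero_of_lt hkj]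

theorem Polynomial.eval_natCast_eq_sum_fwdDiff_iter {R : Type*} [CommRing R] {P : R[X]} {n : ℕ}
    (hP : P.natDegree ≤ n) (k : ℕ) :
    P.eval (k : R) = ∑ j ∈ range (n + 1), k.choose j • Δ_[1] ^[j] P.eval 0 := by
  have newton := shift_eq_sum_fwdDiff_iter 1 P.eval k 0
  rw [zero_add, nsmul_one] at newton
  rw [newton, sum_subset (range_subset_range.mpr (by omega : k + 1 ≤ k + n + 1)),
    sum_subset (range_subset_range.mpr (by omega : n + 1 ≤ k + n + 1))]
  · intro j _ hj
    rw [Polynomial.fwdDiff_iter_eq_zero_of_degree_lt (by simp at hj; omega), Pi.zero_apply,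
      smul_zero]
  · intro j _ hj
    rw [Nat.choose_eq_zero_of_lt (by simp at hj; omega), zero_smul]

theorem Polynomial.hasSum_pow_div_factorial_mul_eval {P : ℝ[X]} {n : ℕ} (hP : P.natDegree ≤ n)
    (t : ℝ) :
    HasSum (fun k : ℕ => t ^ k / k ! * P.eval (k : ℝ))
      (Real.exp t * ∑ j ∈ range (n + 1), Δ_[1] ^[j] P.eval 0 * t ^ j / j !) := by
  have newton (k : ℕ) : t ^ k / k ! * P.eval (k : ℝ) =
      ∑ j ∈ range (n + 1), Δ_[1] ^[j] P.eval 0 * ((k.choose j : ℝ) * t ^ k / k !) := by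
    rw [P.eval_natCast_eq_sum_fwdDiff_iter hP, mul_sum]
    refine sum_congr rfl fun j _ => ?_
    rw [nsmul_eq_mul]
    ring
  have hsum : Real.exp t * ∑ j ∈ range (n + 1), Δ_[1] ^[j] P.eval 0 * t ^ j / j ! =
      ∑ j ∈ range (n + 1), Δ_[1] ^[j] P.eval 0 * (t ^ j / j ! * Real.exp t) := by
    rw [mul_sum]
    exact sum_congr rfl fun j _ => by ring
  simp only [newton, hsum]
  exact hasSum_sum fun j _ =>
    (hasSum_choose_mul_pow_div_factorial j t).mul_left (Δ_[1] ^[j] P.eval 0)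

noncomputable def degFallPoly (lam : ℝ) (n : ℕ) : ℝ[X] :=
  ∏ i ∈ range n, (X - C ((i : ℝ) * lam))

theorem eval_degFallPoly (x lam : ℝ) (n : ℕ) : (degFallPoly lam n).eval x = degFall x lam n := by
  simp [degFallPoly, degFall, eval_prod]

theorem natDegree_degFallPoly (lam : ℝ) (n : ℕ) : (degFallPoly lam n).natDegree = n := by
  simp only [degFallPoly, natDegree_finsetProd_X_sub_C_eq_card, card_range]

theorem natDegree_degFallPoly_comp_le (lam a b : ℝ) (n : ℕ) :
    ((degFallPoly lam n).comp (C a * X + C b)).natDegree ≤ n :=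
  natDegree_comp_le.trans <| by
    rw [natDegree_degFallPoly]
    exact mul_le_of_le_one_right n.zero_le natDegree_linear_le

theorem eval_degFallPoly_comp (lam a b y : ℝ) (n : ℕ) :
    ((degFallPoly lam n).comp (C a * X + C b)).eval y = degFall (a * y + b) lam n := by
  rw [eval_comp, eval_degFallPoly]
  simp

theorem degRDowling_eq_sum_fwdDiff_iter (m r : ℕ) (lam : ℝ) (n : ℕ) (x : ℝ) :
    degRDowling m r lam n x = ∑ j ∈ range (n + 1),
      Δ_[1] ^[j] ((degFallPoly lam n).comp (C (m : ℝ) * X + C (r : ℝ))).eval 0 *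
        (x / m) ^ j / j ! := by
  refine sum_congr rfl fun j _ => ?_
  rw [degRWhitney, fwdDiff_iter_eq_sum_shift, div_pow, sum_mul, sum_div, mul_sum, sum_mul]
  refine sum_congr rfl fun i _ => ?_
  rw [eval_degFallPoly_comp, zero_add, nsmul_one, zsmul_eq_mul]
  push_cast
  ring

theorem degRDowling_dobinski_general (m : ℕ) (r : ℕ) (lam x : ℝ) (n : ℕ) :
    Summable (fun k : ℕ =>
      x ^ k / ((m : ℝ) ^ k * (k.factorial : ℝ)) * degFall ((m : ℝ) * (k : ℝ) + (r : ℝ)) lam n) ∧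
    degRDowling m r lam n x =
      Real.exp (-x / (m : ℝ)) *
        ∑' k : ℕ,
          x ^ k / ((m : ℝ) ^ k * (k.factorial : ℝ)) *
            degFall ((m : ℝ) * (k : ℝ) + (r : ℝ)) lam n := by
  set P := (degFallPoly lam n).comp (C (m : ℝ) * X + C (r : ℝ))
  have hterm (k : ℕ) : x ^ k / ((m : ℝ) ^ k * k !) * degFall (m * k + r) lam n =
      (x / m) ^ k / k ! * P.eval (k : ℝ) := by
    rw [div_pow, div_div, eval_degFallPoly_comp]
  have hsum := hasSum_pow_div_factorial_mul_eval (natDegree_degFallPoly_comp_le lam m r n) (x / m)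
  simp only [hterm]
  refine ⟨hsum.summable, ?_⟩
  rw [hsum.tsum_eq, ← mul_assoc, ← Real.exp_add, neg_div, neg_add_cancel, Real.exp_zero, one_mul,
    degRDowling_eq_sum_fwdDiff_iter]

/-- Dobinski-type formula:
`D^{(r)}_{m,λ}(n,x) = e^{-x/m} Σ_{k=0}^∞ (xᵏ/(mᵏ k!)) (mk+r)_{n,λ}`, with convergence. -/
theorem degRDowling_dobinski (m : ℕ) (hm : 0 < m) (r : ℕ) (lam x : ℝ) (n : ℕ) :
    Summable (fun k : ℕ =>
      x ^ k / ((m : ℝ) ^ k * (k.factorial : ℝ)) * degFall ((m : ℝ) * (k : ℝ) + (r : ℝ)) lam n) ∧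
    degRDowling m r lam n x =
      Real.exp (-x / (m : ℝ)) *
        ∑' k : ℕ,
          x ^ k / ((m : ℝ) ^ k * (k.factorial : ℝ)) *
            degFall ((m : ℝ) * (k : ℝ) + (r : ℝ)) lam n :=
  degRDowling_dobinski_general m r lam x n
end

section
/- Derivative formula (Theorem 2.14, k = 1, Y = 1): with D_{m,λ}(n,x) = Σ_{k=0}^{n} W_{m,λ}(n,k) x^k, where W_{m,λ}(n,k) = (1/(m^k k!)) Σ_{j=0}^{k} C(k,j)(-1)^{k-j}(mj+1)_{n,λ}, for every n ≥ 1 the derivative with respect to x satisfies (d/dx) D_{m,λ}(n,x) = Σ_{j=0}^{n-1} C(n,j) (1)_{n-j, λ/m} · m^{n-j-1} · D_{m,λ}(j,x). -/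
/-- The degenerate Whitney numbers of the second kind. -/
noncomputable def degWhitney (m : ℕ) (lam : ℝ) (n k : ℕ) : ℝ :=
  (1 / ((m : ℝ) ^ k * (k.factorial : ℝ))) *
    ∑ j ∈ Finset.range (k + 1),
      (k.choose j : ℝ) * (-1 : ℝ) ^ (k - j) * degFall ((m : ℝ) * (j : ℝ) + 1) lam n

/-- The degenerate Dowling polynomials `D_{m,λ}(n,x) = Σ_{k=0}^n W_{m,λ}(n,k) xᵏ`. -/
noncomputable def degDowling (m : ℕ) (lam : ℝ) (n : ℕ) (x : ℝ) : ℝ :=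
  ∑ k ∈ Finset.range (n + 1), degWhitney m lam n k * x ^ k

open Finset fwdDiff

@[simp] theorem degFall_zero (x lam : ℝ) : degFall x lam 0 = 1 := prod_range_zero _

theorem degFall_succ (x lam : ℝ) (n : ℕ) :
    degFall x lam (n + 1) = degFall x lam n * (x - n * lam) :=
  prod_range_succ _ _

theorem degFall_mul_mul (c x lam : ℝ) (n : ℕ) :
    degFall (c * x) (c * lam) n = c ^ n * degFall x lam n := by
  have hpow := pow_card_mul_prod (s := range n) (f := fun i : ℕ => x - i * lam) (b := c)
  rw [card_range] at hpow
  rw [degFall, degFall, hpow]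
  exact prod_congr rfl fun i _ => by ring

theorem degFall_add_antidiagonal (x y lam : ℝ) (n : ℕ) :
    degFall (x + y) lam n =
      ∑ ij ∈ antidiagonal n, (n.choose ij.1 : ℝ) * (degFall x lam ij.1 * degFall y lam ij.2) := by
  induction n with
  | zero => simp
  | succ n ih =>
    rw [sum_antidiagonal_choose_succ_mul (fun i j => degFall x lam i * degFall y lam j),
      degFall_succ, ih, sum_mul, ← sum_add_distrib]
    -- on the antidiagonal, `x + y - nλ = (x - iλ) + (y - jλ)`
    refine sum_congr rfl fun ij hij => ?_
    have hn : (n : ℝ) = ij.1 + ij.2 := by exact_mod_cast (mem_antidiagonal.mp hij).symm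
    rw [Nat.choose_symm_of_eq_add (mem_antidiagonal.mp hij).symm, degFall_succ, degFall_succ, hn]
    ring

theorem degFall_add (x y lam : ℝ) (n : ℕ) :
    degFall (x + y) lam n =
      ∑ j ∈ range (n + 1), (n.choose j : ℝ) * degFall x lam j * degFall y lam (n - j) := by
  simp only [degFall_add_antidiagonal, Nat.sum_antidiagonal_eq_sum_range_succ
    (fun i j => (n.choose i : ℝ) * (degFall x lam i * degFall y lam j)), mul_assoc]

theorem fwdDiff_degFall_affine (a b lam : ℝ) (n : ℕ) :
    Δ_[1] (fun y => degFall (a * y + b) lam n) =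
      ∑ j ∈ range n,
        ((n.choose j : ℝ) * degFall a lam (n - j)) • fun y => degFall (a * y + b) lam j := by
  funext y
  have hshift : a * (y + 1) + b = (a * y + b) + a := by ring
  rw [fwdDiff, hshift, degFall_add, sum_range_succ, Finset.sum_apply]
  simp [mul_assoc, mul_comm (degFall a lam _)]

theorem fwdDiff_iter_degFall_affine_eq_zero (a b lam : ℝ) {n k : ℕ} (h : n < k) :
    (Δ_[1])^[k] (fun y => degFall (a * y + b) lam n) = 0 := by
  induction k generalizing n with
  | zero => omega
  | succ k ih =>
    rw [Function.iterate_succ_apply, fwdDiff_degFall_affine, fwdDiff_iter_finsetSum]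
    exact sum_eq_zero fun j hj => by
      rw [fwdDiff_iter_const_smul, ih (by have := mem_range.mp hj; omega), smul_zero]

theorem degWhitney_eq_fwdDiff_iter (m : ℕ) (lam : ℝ) (n k : ℕ) :
    degWhitney m lam n k =
      (Δ_[1])^[k] (fun y => degFall (m * y + 1) lam n) 0 / ((m : ℝ) ^ k * k.factorial) := by
  rw [degWhitney, fwdDiff_iter_eq_sum_shift, one_div_mul_eq_div]
  congr 1
  refine sum_congr rfl fun j _ => ?_
  simp only [zsmul_eq_mul, nsmul_eq_mul, zero_add, mul_one]
  push_cast
  ring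

theorem degWhitney_eq_zero_of_lt (m : ℕ) (lam : ℝ) {n k : ℕ} (h : n < k) :
    degWhitney m lam n k = 0 := by
  rw [degWhitney_eq_fwdDiff_iter, fwdDiff_iter_degFall_affine_eq_zero _ _ _ h, Pi.zero_apply,
    zero_div]

theorem succ_mul_degWhitney_succ {m : ℕ} (hm : m ≠ 0) (lam : ℝ) (n k : ℕ) :
    (k + 1 : ℝ) * degWhitney m lam n (k + 1) =
      ∑ j ∈ range n, (n.choose j : ℝ) * degFall m lam (n - j) / m * degWhitney m lam j k := by
  have hm' : (m : ℝ) ≠ 0 := Nat.cast_ne_zero.mpr hm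
  simp only [degWhitney_eq_fwdDiff_iter, Function.iterate_succ_apply, fwdDiff_degFall_affine,
    fwdDiff_iter_finsetSum, fwdDiff_iter_const_smul, Finset.sum_apply, Pi.smul_apply, smul_eq_mul,
    mul_sum, sum_div, Nat.factorial_succ]
  refine sum_congr rfl fun j _ => ?_
  push_cast
  field_simp
  ring

theorem degDowling_eq_sum_range (m : ℕ) (lam : ℝ) {n N : ℕ} (h : n < N) (x : ℝ) :
    degDowling m lam n x = ∑ k ∈ range N, degWhitney m lam n k * x ^ k :=
  sum_subset (range_subset_range.mpr h) fun k _ hk => by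
    rw [degWhitney_eq_zero_of_lt m lam (by simpa using hk), zero_mul]

theorem hasDerivAt_sum_range_mul_pow (c : ℕ → ℝ) (N : ℕ) (x : ℝ) :
    HasDerivAt (fun t => ∑ k ∈ range (N + 1), c k * t ^ k)
      (∑ k ∈ range N, (k + 1 : ℝ) * c (k + 1) * x ^ k) x := by
  refine (HasDerivAt.fun_sum fun k _ => (hasDerivAt_pow k x).const_mul (c k)).congr_deriv ?_
  rw [sum_range_succ']
  simp [mul_comm, mul_left_comm]

theorem degFall_one_div_mul_pow {m : ℕ} (hm : m ≠ 0) (lam : ℝ) {t : ℕ} (ht : t ≠ 0) :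
    degFall 1 (lam / m) t * (m : ℝ) ^ (t - 1) = degFall m lam t / m := by
  have hm' : (m : ℝ) ≠ 0 := Nat.cast_ne_zero.mpr hm
  have hscale := degFall_mul_mul m 1 (lam / m) t
  rw [mul_one, mul_div_cancel₀ lam hm'] at hscale
  obtain ⟨s, rfl⟩ := Nat.exists_eq_succ_of_ne_zero ht
  rw [hscale, Nat.succ_sub_one, pow_succ]
  field_simp

theorem hasDerivAt_degDowling (m : ℕ) (lam : ℝ) (n : ℕ) (x : ℝ) :
    HasDerivAt (degDowling m lam n)
      (∑ k ∈ range n, (k + 1 : ℝ) * degWhitney m lam n (k + 1) * x ^ k) x :=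
  hasDerivAt_sum_range_mul_pow _ n x

theorem degDowling_deriv_general (m : ℕ) (hm : 0 < m) (lam : ℝ) (n : ℕ) (x : ℝ) :
    deriv (fun t => degDowling m lam n t) x =
      ∑ j ∈ Finset.range n,
        (n.choose j : ℝ) * degFall 1 (lam / (m : ℝ)) (n - j) * (m : ℝ) ^ (n - j - 1) *
          degDowling m lam j x := by
  rw [(hasDerivAt_degDowling m lam n x).deriv]
  simp only [succ_mul_degWhitney_succ hm.ne', sum_mul]
  rw [sum_comm]
  refine sum_congr rfl fun j hj => ?_
  rw [degDowling_eq_sum_range m lam (mem_range.mp hj), mul_sum,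
    mul_assoc (n.choose j : ℝ), degFall_one_div_mul_pow hm.ne' lam (Nat.sub_ne_zero_of_lt (mem_range.mp hj))]
  exact sum_congr rfl fun k _ => by ring

/-- Derivative formula:
`(d/dx) D_{m,λ}(n,x) = Σ_{j=0}^{n-1} C(n,j) (1)_{n-j,λ/m} m^{n-j-1} D_{m,λ}(j,x)` for `n ≥ 1`. -/
theorem degDowling_deriv (m : ℕ) (hm : 0 < m) (lam : ℝ) (n : ℕ) (hn : 1 ≤ n) (x : ℝ) :
    deriv (fun t => degDowling m lam n t) x =
      ∑ j ∈ Finset.range n,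
        (n.choose j : ℝ) * degFall 1 (lam / (m : ℝ)) (n - j) * (m : ℝ) ^ (n - j - 1) *
          degDowling m lam j x :=
  degDowling_deriv_general m hm lam n x
end
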